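/- If a tree automaton A is a quasi-model for R, then for every rewrite step t →_R s between arbitrary (possibly open) terms and every assignment α, ⟦t⟧_α ⊆ ⟦s⟧_α. -/
import Mathlib


inductive Tm (F : Type) (ar : F → ℕ) (V : Type) : Type
  | var : V → Tm F ar V
  | fn : (f : F) → (Fin (ar f) → Tm F ar V) → Tm F ar V

def Tm.subst {F : Type} {ar : F → ℕ} {V W : Type} (σ : V → Tm F ar W) :
    Tm F ar V → Tm F ar W
  | .var x => σ x
  | .fn f ts => .fn f (fun i => (ts i).subst σ)

inductive Rew {F : Type} {ar : F → ℕ} {V W : Type}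
    (R : Set (Tm F ar V × Tm F ar V)) : Tm F ar W → Tm F ar W → Prop
  | rule (l r : Tm F ar V) (σ : V → Tm F ar W) :
      (l, r) ∈ R → Rew R (l.subst σ) (r.subst σ)
  | congr (f : F) (ts : Fin (ar f) → Tm F ar W) (i : Fin (ar f)) {s' : Tm F ar W} :
      Rew R (ts i) s' → Rew R (.fn f ts) (.fn f (Function.update ts i s'))

def interp {F : Type} {ar : F → ℕ} {V Q : Type}
    (δ : (f : F) → (Fin (ar f) → Q) → Q → Prop) (α : V → Set Q) :
    Tm F ar V → Set Q
  | .var x => α x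
  | .fn f ts => {q | ∃ qs : Fin (ar f) → Q, (∀ i, qs i ∈ interp δ α (ts i)) ∧ δ f qs q}

theorem interp_subst {F : Type} {ar : F → ℕ} {V W Q : Type}
    (δ : (f : F) → (Fin (ar f) → Q) → Q → Prop) (α : W → Set Q)
    (σ : V → Tm F ar W) (t : Tm F ar V) :
    interp δ α (t.subst σ) = interp δ (fun x => interp δ α (σ x)) t := by
  induction t with
  | var x => rfl
  | fn f ts ih =>
    simp only [Tm.subst, interp]
    congr 1
    ext q
    constructor <;> rintro ⟨qs, h1, h2⟩ <;> exact ⟨qs, fun i => by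
      have := h1 i; rw [ih i] at * <;> simpa using this, h2⟩

/-- a quasi-model is monotone along arbitrary (possibly open)
rewrite steps. -/
theorem interp_subset_of_rew_of_quasiModel
    {F : Type} {ar : F → ℕ} {V Q : Type}
    (δ : (f : F) → (Fin (ar f) → Q) → Q → Prop)
    (R : Set (Tm F ar V × Tm F ar V))
    (hquasi : ∀ l r, (l, r) ∈ R → ∀ α : V → Set Q, interp δ α l ⊆ interp δ α r) :
    ∀ t s : Tm F ar V, Rew R t s →
      ∀ α : V → Set Q, interp δ α t ⊆ interp δ α s := by
  intro t s h
  induction h with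
  | rule l r σ hlr =>
    intro α
    rw [interp_subst, interp_subst]
    exact hquasi l r hlr _
  | congr f ts i h ih =>
    intro α q hq
    obtain ⟨qs, h1, h2⟩ := hq
    refine ⟨qs, fun j => ?_, h2⟩
    rcases eq_or_ne j i with rfl | hne
    · rw [Function.update_self]
      exact ih α (h1 j)
    · rw [Function.update_of_ne hne]
      exact h1 j
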